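/- Let $\gamma > 0$, $C_\alpha > 0$, and let $k$ solve $k'(t) = \gamma - \frac{C_\alpha}{\sqrt{2}} k(t)^{3/2}$ with $k(0) = q_0 > 0$. If $q_0 > (\sqrt{2}\gamma/C_\alpha)^{2/3}$, then $k$ is strictly decreasing and convex on $[0,\infty)$; if $q_0 < (\sqrt{2}\gamma/C_\alpha)^{2/3}$, then $k$ is strictly increasing and concave on $[0,\infty)$. -/

import Mathlib

open Real Set

/-- slope bound for `x ^ (3/2)` -/
lemma rpow32_sub_le {a x : ℝ} (ha : 0 ≤ a) (hax : a ≤ x) :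
    x ^ ((3 : ℝ) / 2) - a ^ ((3 : ℝ) / 2) ≤ 3 / 2 * Real.sqrt x * (x - a) := by
  rcases eq_or_lt_of_le hax with rfl | hax
  · simp
  have hx0 : 0 ≤ x := ha.trans hax.le
  have hderiv : ∀ y ∈ Set.Ioo a x,
      HasDerivAt (fun y : ℝ => y ^ ((3 : ℝ) / 2)) ((3 : ℝ) / 2 * y ^ ((1 : ℝ) / 2)) y := by
    intro y hy
    have := Real.hasDerivAt_rpow_const (x := y) (p := (3 : ℝ) / 2) (Or.inr (by norm_num))
    convert this using 2
    norm_num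
  have hcont : ContinuousOn (fun y : ℝ => y ^ ((3 : ℝ) / 2)) (Set.Icc a x) := by
    apply ContinuousOn.rpow_const continuousOn_id
    intro y hy
    right; norm_num
  obtain ⟨c, hc, hceq⟩ := exists_hasDerivAt_eq_slope (fun y : ℝ => y ^ ((3 : ℝ) / 2))
    (fun y => (3 : ℝ) / 2 * y ^ ((1 : ℝ) / 2)) hax hcont hderiv
  have hc0 : 0 ≤ c := ha.trans hc.1.le
  have hcle : c ^ ((1 : ℝ) / 2) ≤ Real.sqrt x := by
    rw [Real.sqrt_eq_rpow]
    exact Real.rpow_le_rpow hc0 hc.2.le (by norm_num)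
  have hxa : 0 < x - a := sub_pos.mpr hax
  have : (x ^ ((3 : ℝ) / 2) - a ^ ((3 : ℝ) / 2)) / (x - a) ≤ 3 / 2 * Real.sqrt x := by
    rw [← hceq]
    have h12 : (0 : ℝ) ≤ 3 / 2 := by norm_num
    nlinarith [hcle, Real.rpow_nonneg hc0 ((1 : ℝ)/2)]
  calc x ^ ((3 : ℝ) / 2) - a ^ ((3 : ℝ) / 2)
      = (x ^ ((3 : ℝ) / 2) - a ^ ((3 : ℝ) / 2)) / (x - a) * (x - a) := by
        field_simp
    _ ≤ 3 / 2 * Real.sqrt x * (x - a) := by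
        exact mul_le_mul_of_nonneg_right this hxa.le

/-- solutions starting above the equilibrium stay above it -/
lemma stay_above {c K : ℝ} (hc : 0 < c) (hK : 0 < K) (k : ℝ → ℝ)
    (hODE : ∀ t ≥ 0, HasDerivAt k (c * (K ^ ((3 : ℝ) / 2) - (k t) ^ ((3 : ℝ) / 2))) t)
    (h0 : K < k 0) : ∀ t ≥ 0, K < k t := by
  by_contra h
  push_neg at h
  obtain ⟨t1, ht1, hkt1⟩ := h
  have hcontk : ∀ s ∈ Icc (0 : ℝ) t1, ContinuousWithinAt k (Icc 0 t1) s := fun s hs =>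
    ((hODE s hs.1).continuousAt).continuousWithinAt
  have ht1pos : 0 < t1 := by
    rcases eq_or_lt_of_le ht1 with rfl | h'
    · exact absurd hkt1 (not_le.mpr h0)
    · exact h'
  set S : Set ℝ := {t ∈ Icc (0 : ℝ) t1 | k t ≤ K} with hS
  have hSne : S.Nonempty := ⟨t1, ⟨⟨ht1pos.le, le_refl _⟩, hkt1⟩⟩
  have hScl : IsClosed S := by
    have : S = Icc (0 : ℝ) t1 ∩ k ⁻¹' Iic K := by
      ext t; simp [hS, Set.mem_sep_iff, and_comm]
    rw [this]
    exact ContinuousOn.preimage_isClosed_of_isClosed hcontk isClosed_Icc isClosed_Iic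
  have hScpt : IsCompact S := isCompact_Icc.of_isClosed_subset hScl (fun t ht => ht.1)
  set t0 := sInf S with ht0def
  have ht0S : t0 ∈ S := hScpt.sInf_mem hSne
  have ht0pos : 0 < t0 := by
    rcases eq_or_lt_of_le ht0S.1.1 with h' | h'
    · exfalso; rw [← h'] at ht0S; exact absurd ht0S.2 (not_le.mpr h0)
    · exact h'
  have hbefore : ∀ t ∈ Ico (0 : ℝ) t0, K < k t := by
    intro t ht
    by_contra hle
    push_neg at hle
    have : t ∈ S := ⟨⟨ht.1, ht.2.le.trans ht0S.1.2⟩, hle⟩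
    exact absurd (csInf_le hScpt.bddBelow this) (not_le.mpr ht.2)
  -- maximum of k on [0, t0]
  have hsub : Icc (0 : ℝ) t0 ⊆ Icc (0 : ℝ) t1 := Icc_subset_Icc le_rfl ht0S.1.2
  have hcont0 : ContinuousOn k (Icc (0 : ℝ) t0) := fun s hs =>
    ((hODE s hs.1).continuousAt).continuousWithinAt
  obtain ⟨tm, htm, hmax⟩ := isCompact_Icc.exists_isMaxOn (nonempty_Icc.mpr ht0pos.le) hcont0
  set M := k tm with hM
  have hM0 : 0 ≤ M := (hK.trans (lt_of_lt_of_le h0 (hmax ⟨le_rfl, ht0pos.le⟩))).le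
  set L := c * (3 / 2 * Real.sqrt M) with hL
  set v : ℝ → ℝ := fun t => (k t - K) * Real.exp (L * t) with hv
  have hvderiv : ∀ t ∈ Icc (0 : ℝ) t0, HasDerivAt v
      (c * (K ^ ((3 : ℝ) / 2) - (k t) ^ ((3 : ℝ) / 2)) * Real.exp (L * t)
        + (k t - K) * (L * Real.exp (L * t))) t := by
    intro t ht
    have h1 : HasDerivAt (fun t => k t - K)
        (c * (K ^ ((3 : ℝ) / 2) - (k t) ^ ((3 : ℝ) / 2))) t := (hODE t ht.1).sub_const K
    have h2 : HasDerivAt (fun t : ℝ => Real.exp (L * t)) (L * Real.exp (L * t)) t := by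
      have := ((hasDerivAt_id t).const_mul L).exp
      simpa [mul_comm] using this
    exact h1.mul h2
  have hmono : MonotoneOn v (Icc (0 : ℝ) t0) := by
    apply monotoneOn_of_deriv_nonneg (convex_Icc 0 t0)
    · intro s hs
      exact ((hvderiv s hs).continuousAt).continuousWithinAt
    · intro s hs
      rw [interior_Icc] at hs
      exact ((hvderiv s ⟨hs.1.le, hs.2.le⟩).differentiableAt).differentiableWithinAt
    · intro s hs
      rw [interior_Icc] at hs
      rw [(hvderiv s ⟨hs.1.le, hs.2.le⟩).deriv]
      have hks : K < k s := hbefore s ⟨hs.1.le, hs.2⟩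
      have hksM : k s ≤ M := hmax ⟨hs.1.le, hs.2.le⟩
      have hbound : (k s) ^ ((3 : ℝ) / 2) - K ^ ((3 : ℝ) / 2)
          ≤ 3 / 2 * Real.sqrt M * (k s - K) := by
        calc (k s) ^ ((3 : ℝ) / 2) - K ^ ((3 : ℝ) / 2)
            ≤ 3 / 2 * Real.sqrt (k s) * (k s - K) := rpow32_sub_le hK.le hks.le
          _ ≤ 3 / 2 * Real.sqrt M * (k s - K) := by
              apply mul_le_mul_of_nonneg_right _ (sub_nonneg.mpr hks.le)
              exact mul_le_mul_of_nonneg_left (Real.sqrt_le_sqrt hksM) (by norm_num)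
      have hexp : 0 < Real.exp (L * s) := Real.exp_pos _
      have : c * (K ^ ((3 : ℝ) / 2) - (k s) ^ ((3 : ℝ) / 2)) + (k s - K) * L ≥ 0 := by
        rw [hL]
        nlinarith
      nlinarith
  have hv0 : 0 < v 0 := by
    simp only [hv, mul_zero, Real.exp_zero, mul_one]
    linarith
  have hvt0 : v t0 ≤ 0 := by
    have : k t0 - K ≤ 0 := sub_nonpos.mpr ht0S.2
    exact mul_nonpos_of_nonpos_of_nonneg this (Real.exp_pos _).le
  have := hmono ⟨le_rfl, ht0pos.le⟩ ⟨ht0pos.le, le_rfl⟩ ht0pos.le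
  linarith

/-- solutions starting below the equilibrium stay below it -/
lemma stay_below {c K : ℝ} (hc : 0 < c) (hK : 0 < K) (k : ℝ → ℝ)
    (hkpos : ∀ t ≥ 0, 0 < k t)
    (hODE : ∀ t ≥ 0, HasDerivAt k (c * (K ^ ((3 : ℝ) / 2) - (k t) ^ ((3 : ℝ) / 2))) t)
    (h0 : k 0 < K) : ∀ t ≥ 0, k t < K := by
  by_contra h
  push_neg at h
  obtain ⟨t1, ht1, hkt1⟩ := h
  have ht1pos : 0 < t1 := by
    rcases eq_or_lt_of_le ht1 with rfl | h'
    · exact absurd hkt1 (not_le.mpr h0)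
    · exact h'
  have hcontk : ∀ s ∈ Icc (0 : ℝ) t1, ContinuousWithinAt k (Icc 0 t1) s := fun s hs =>
    ((hODE s hs.1).continuousAt).continuousWithinAt
  set S : Set ℝ := {t ∈ Icc (0 : ℝ) t1 | K ≤ k t} with hS
  have hSne : S.Nonempty := ⟨t1, ⟨⟨ht1pos.le, le_refl _⟩, hkt1⟩⟩
  have hScl : IsClosed S := by
    have : S = Icc (0 : ℝ) t1 ∩ k ⁻¹' Ici K := by
      ext t; simp [hS, Set.mem_sep_iff, and_comm]
    rw [this]
    exact ContinuousOn.preimage_isClosed_of_isClosed hcontk isClosed_Icc isClosed_Ici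
  have hScpt : IsCompact S := isCompact_Icc.of_isClosed_subset hScl (fun t ht => ht.1)
  set t0 := sInf S with ht0def
  have ht0S : t0 ∈ S := hScpt.sInf_mem hSne
  have ht0pos : 0 < t0 := by
    rcases eq_or_lt_of_le ht0S.1.1 with h' | h'
    · exfalso; rw [← h'] at ht0S; exact absurd ht0S.2 (not_le.mpr h0)
    · exact h'
  have hbefore : ∀ t ∈ Ico (0 : ℝ) t0, k t < K := by
    intro t ht
    by_contra hle
    push_neg at hle
    have : t ∈ S := ⟨⟨ht.1, ht.2.le.trans ht0S.1.2⟩, hle⟩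
    exact absurd (csInf_le hScpt.bddBelow this) (not_le.mpr ht.2)
  set L := c * (3 / 2 * Real.sqrt K) with hL
  set v : ℝ → ℝ := fun t => (K - k t) * Real.exp (L * t) with hv
  have hvderiv : ∀ t ∈ Icc (0 : ℝ) t0, HasDerivAt v
      (-(c * (K ^ ((3 : ℝ) / 2) - (k t) ^ ((3 : ℝ) / 2))) * Real.exp (L * t)
        + (K - k t) * (L * Real.exp (L * t))) t := by
    intro t ht
    have h1 : HasDerivAt (fun t => K - k t)
        (-(c * (K ^ ((3 : ℝ) / 2) - (k t) ^ ((3 : ℝ) / 2)))) t :=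
      (hODE t ht.1).const_sub K
    have h2 : HasDerivAt (fun t : ℝ => Real.exp (L * t)) (L * Real.exp (L * t)) t := by
      have := ((hasDerivAt_id t).const_mul L).exp
      simpa [mul_comm] using this
    exact h1.mul h2
  have hmono : MonotoneOn v (Icc (0 : ℝ) t0) := by
    apply monotoneOn_of_deriv_nonneg (convex_Icc 0 t0)
    · intro s hs
      exact ((hvderiv s hs).continuousAt).continuousWithinAt
    · intro s hs
      rw [interior_Icc] at hs
      exact ((hvderiv s ⟨hs.1.le, hs.2.le⟩).differentiableAt).differentiableWithinAt
    · intro s hs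
      rw [interior_Icc] at hs
      rw [(hvderiv s ⟨hs.1.le, hs.2.le⟩).deriv]
      have hks : k s < K := hbefore s ⟨hs.1.le, hs.2⟩
      have hks0 : 0 < k s := hkpos s hs.1.le
      have hbound : K ^ ((3 : ℝ) / 2) - (k s) ^ ((3 : ℝ) / 2)
          ≤ 3 / 2 * Real.sqrt K * (K - k s) := rpow32_sub_le hks0.le hks.le
      have hexp : 0 < Real.exp (L * s) := Real.exp_pos _
      have : -(c * (K ^ ((3 : ℝ) / 2) - (k s) ^ ((3 : ℝ) / 2))) + (K - k s) * L ≥ 0 := by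
        rw [hL]
        nlinarith
      nlinarith
  have hv0 : 0 < v 0 := by
    simp only [hv, mul_zero, Real.exp_zero, mul_one]
    linarith
  have hvt0 : v t0 ≤ 0 := by
    have : K - k t0 ≤ 0 := sub_nonpos.mpr ht0S.2
    exact mul_nonpos_of_nonpos_of_nonneg this (Real.exp_pos _).le
  have := hmono ⟨le_rfl, ht0pos.le⟩ ⟨ht0pos.le, le_rfl⟩ ht0pos.le
  linarith

/-- Monotonicity and convexity/concavity of the mean TKE solution according to
the position of the initial datum relative to the equilibrium. -/
theorem stmt_3 (γ Cα q0 : ℝ) (hγ : 0 < γ) (hCα : 0 < Cα) (hq0 : 0 < q0)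
    (k : ℝ → ℝ) (hkpos : ∀ t ≥ 0, 0 < k t) (hk0 : k 0 = q0)
    (hODE : ∀ t ≥ 0, HasDerivAt k (γ - Cα / Real.sqrt 2 * (k t) ^ ((3 : ℝ) / 2)) t) :
    (q0 > (Real.sqrt 2 * γ / Cα) ^ ((2 : ℝ) / 3) →
      StrictAntiOn k (Ici (0 : ℝ)) ∧ ConvexOn ℝ (Ici (0 : ℝ)) k) ∧
    (q0 < (Real.sqrt 2 * γ / Cα) ^ ((2 : ℝ) / 3) →
      StrictMonoOn k (Ici (0 : ℝ)) ∧ ConcaveOn ℝ (Ici (0 : ℝ)) k) := by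
  have hs2 : (0 : ℝ) < Real.sqrt 2 := Real.sqrt_pos.mpr two_pos
  set c := Cα / Real.sqrt 2 with hc
  have hc0 : 0 < c := div_pos hCα hs2
  set K := (Real.sqrt 2 * γ / Cα) ^ ((2 : ℝ) / 3) with hKdef
  have hquot : Real.sqrt 2 * γ / Cα = γ / c := by
    rw [hc]; field_simp
  have hquotpos : 0 < γ / c := div_pos hγ hc0
  have hKpos : 0 < K := by
    rw [hKdef, hquot]; exact Real.rpow_pos_of_pos hquotpos _
  have hK32 : c * K ^ ((3 : ℝ) / 2) = γ := by
    rw [hKdef, hquot, ← Real.rpow_mul hquotpos.le]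
    norm_num
    field_simp
  -- rewrite the ODE
  have hODE' : ∀ t ≥ 0, HasDerivAt k (c * (K ^ ((3 : ℝ) / 2) - (k t) ^ ((3 : ℝ) / 2))) t := by
    intro t ht
    have := hODE t ht
    have heq : γ - c * (k t) ^ ((3 : ℝ) / 2)
        = c * (K ^ ((3 : ℝ) / 2) - (k t) ^ ((3 : ℝ) / 2)) := by
      rw [mul_sub, hK32]
    rw [← heq]
    exact this
  have hcont : ContinuousOn k (Ici (0 : ℝ)) := fun s hs =>
    ((hODE' s hs).continuousAt).continuousWithinAt
  have hdiff : DifferentiableOn ℝ k (interior (Ici (0 : ℝ))) := by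
    rw [interior_Ici]
    intro s hs
    exact ((hODE' s (le_of_lt hs)).differentiableAt).differentiableWithinAt
  have hderiv : ∀ t ≥ 0, deriv k t = c * (K ^ ((3 : ℝ) / 2) - (k t) ^ ((3 : ℝ) / 2)) :=
    fun t ht => (hODE' t ht).deriv
  constructor
  · intro hgt
    have habove : ∀ t ≥ 0, K < k t := by
      apply stay_above hc0 hKpos k hODE'
      rw [hk0]; exact hgt
    have hanti : StrictAntiOn k (Ici (0 : ℝ)) := by
      apply strictAntiOn_of_deriv_neg (convex_Ici 0) hcont
      intro s hs
      rw [interior_Ici] at hs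
      rw [hderiv s (le_of_lt hs)]
      have : K ^ ((3 : ℝ) / 2) < (k s) ^ ((3 : ℝ) / 2) :=
        Real.rpow_lt_rpow hKpos.le (habove s (le_of_lt hs)) (by norm_num)
      nlinarith
    refine ⟨hanti, ?_⟩
    apply MonotoneOn.convexOn_of_deriv (convex_Ici 0) hcont hdiff
    rw [interior_Ici]
    intro s hs t ht hst
    rw [hderiv s (le_of_lt hs), hderiv t (le_of_lt ht)]
    have hkts : k t ≤ k s := by
      rcases eq_or_lt_of_le hst with rfl | h'
      · exact le_rfl
      · exact (hanti (Set.mem_Ici.mpr (le_of_lt hs)) (Set.mem_Ici.mpr (le_of_lt ht)) h').le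
    have : (k t) ^ ((3 : ℝ) / 2) ≤ (k s) ^ ((3 : ℝ) / 2) :=
      Real.rpow_le_rpow (hkpos t (le_of_lt ht)).le hkts (by norm_num)
    nlinarith
  · intro hlt
    have hbelow : ∀ t ≥ 0, k t < K := by
      apply stay_below hc0 hKpos k hkpos hODE'
      rw [hk0]; exact hlt
    have hmono : StrictMonoOn k (Ici (0 : ℝ)) := by
      apply strictMonoOn_of_deriv_pos (convex_Ici 0) hcont
      intro s hs
      rw [interior_Ici] at hs
      rw [hderiv s (le_of_lt hs)]
      have : (k s) ^ ((3 : ℝ) / 2) < K ^ ((3 : ℝ) / 2) :=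
        Real.rpow_lt_rpow (hkpos s (le_of_lt hs)).le (hbelow s (le_of_lt hs)) (by norm_num)
      nlinarith
    refine ⟨hmono, ?_⟩
    apply AntitoneOn.concaveOn_of_deriv (convex_Ici 0) hcont hdiff
    rw [interior_Ici]
    intro s hs t ht hst
    rw [hderiv s (le_of_lt hs), hderiv t (le_of_lt ht)]
    have hkts : k s ≤ k t := by
      rcases eq_or_lt_of_le hst with rfl | h'
      · exact le_rfl
      · exact (hmono (Set.mem_Ici.mpr (le_of_lt hs)) (Set.mem_Ici.mpr (le_of_lt ht)) h').le
    have : (k s) ^ ((3 : ℝ) / 2) ≤ (k t) ^ ((3 : ℝ) / 2) :=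
      Real.rpow_le_rpow (hkpos s (le_of_lt hs)).le hkts (by norm_num)
    nlinarith
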